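/- arXiv:1707.01784 — 2 statements merged into one kernel-verified Lean document; each statement's English description precedes it below -/
import Mathlib

section
/- The time-like disformal relation is invariant under the following simultaneous transformation: if g̃ = λ g + (γ/(vᵀ g v)) (g v)(g v)ᵀ with λ ≠ 0 and λ + γ ≠ 0, then g̃ v = (λ+γ) (g v) and vᵀ g̃ v = (λ+γ) (vᵀ g v) ≠ 0, and setting Ṽ := g̃ v, α̃ := α/λ, β̃ := β/(λ+γ) − α γ/(λ(λ+γ)), one has α̃ g̃ + (β̃/(vᵀ g̃ v)) Ṽ Ṽᵀ = α g + (β/(vᵀ g v)) (g v)(g v)ᵀ. -/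
open Matrix

lemma vecMulVec_mulVec' {n : ℕ} (a b u : Fin n → ℝ) :
    (vecMulVec a b).mulVec u = (b ⬝ᵥ u) • a := by
  ext i
  simp [vecMulVec_apply, mulVec, dotProduct, Finset.mul_sum, Finset.sum_mul, mul_assoc]
  exact Finset.sum_congr rfl fun x _ => by ring

lemma vecMulVec_smul_smul {n : ℕ} (c d : ℝ) (a b : Fin n → ℝ) :
    vecMulVec (c • a) (d • b) = (c * d) • vecMulVec a b := by
  ext i j
  simp [vecMulVec_apply]
  ring

/-- invariance of the time-like disformal relation under the
simultaneous transformation `g̃ = λ g + (γ/(vᵀ g v)) (g v)(g v)ᵀ`,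
`Ṽ := g̃ v = (λ+γ) g v`, `α̃ := α/λ`, `β̃ := β/(λ+γ) − α γ/(λ(λ+γ))`. -/
theorem timelikeDisformal_weyl_invariance {n : ℕ} (hn : 1 ≤ n)
    (g : Matrix (Fin n) (Fin n) ℝ) (hg : IsUnit g.det) (hgsym : g.IsSymm)
    (v : Fin n → ℝ) (hv : v ⬝ᵥ g.mulVec v ≠ 0)
    (α β lam γ : ℝ) (hlam : lam ≠ 0) (hlamγ : lam + γ ≠ 0) :
    (lam • g + (γ / (v ⬝ᵥ g.mulVec v)) • vecMulVec (g.mulVec v) (g.mulVec v)).mulVec v =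
        (lam + γ) • g.mulVec v ∧
      v ⬝ᵥ (lam • g + (γ / (v ⬝ᵥ g.mulVec v)) •
          vecMulVec (g.mulVec v) (g.mulVec v)).mulVec v =
        (lam + γ) * (v ⬝ᵥ g.mulVec v) ∧
      v ⬝ᵥ (lam • g + (γ / (v ⬝ᵥ g.mulVec v)) •
          vecMulVec (g.mulVec v) (g.mulVec v)).mulVec v ≠ 0 ∧
      (α / lam) • (lam • g + (γ / (v ⬝ᵥ g.mulVec v)) •
            vecMulVec (g.mulVec v) (g.mulVec v)) +
          ((β / (lam + γ) - α * γ / (lam * (lam + γ))) /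
              (v ⬝ᵥ (lam • g + (γ / (v ⬝ᵥ g.mulVec v)) •
                vecMulVec (g.mulVec v) (g.mulVec v)).mulVec v)) •
            vecMulVec
              ((lam • g + (γ / (v ⬝ᵥ g.mulVec v)) •
                vecMulVec (g.mulVec v) (g.mulVec v)).mulVec v)
              ((lam • g + (γ / (v ⬝ᵥ g.mulVec v)) •
                vecMulVec (g.mulVec v) (g.mulVec v)).mulVec v) =
        α • g + (β / (v ⬝ᵥ g.mulVec v)) • vecMulVec (g.mulVec v) (g.mulVec v) := by
  set w := g.mulVec v with hw
  have h1 : (lam • g + (γ / (v ⬝ᵥ w)) • vecMulVec w w).mulVec v = (lam + γ) • w := by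
    rw [add_mulVec, smul_mulVec, smul_mulVec, vecMulVec_mulVec', ← hw,
      dotProduct_comm w v, smul_smul, div_mul_cancel₀ _ hv, add_smul]
  have h2 : v ⬝ᵥ (lam • g + (γ / (v ⬝ᵥ w)) • vecMulVec w w).mulVec v
      = (lam + γ) * (v ⬝ᵥ w) := by
    rw [h1, dotProduct_smul, smul_eq_mul]
  have h3 : v ⬝ᵥ (lam • g + (γ / (v ⬝ᵥ w)) • vecMulVec w w).mulVec v ≠ 0 := by
    rw [h2]; exact mul_ne_zero hlamγ hv
  refine ⟨h1, h2, h3, ?_⟩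
  rw [h1, dotProduct_smul, smul_eq_mul, vecMulVec_smul_smul, smul_add, smul_smul, smul_smul, smul_smul, add_assoc, ← add_smul]
  congr 1
  · congr 1
    field_simp
  · congr 1
    field_simp
    ring
end

section
/- Suppose X : ℝⁿ → ℝⁿ is three times continuously differentiable (covariant components X_α) and satisfies the null-like disformal Killing equation with constant source: ∂_λ X_α + ∂_α X_λ = (2/n) η_{λα} (η^{cb} ∂_c X_b) + 4 C_λ C_α everywhere on ℝⁿ. Then the function ψ := (2/n) η^{cb} ∂_c X_b is harmonic with respect to η: η^{ab} ∂_a ∂_b ψ = 0 on ℝⁿ. -/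
open Matrix

/-- Partial derivative `∂_c f` of a scalar field on `ℝⁿ`. -/
noncomputable def pd {n : ℕ} (f : (Fin n → ℝ) → ℝ) (c : Fin n) (x : Fin n → ℝ) : ℝ :=
  fderiv ℝ f x (Pi.single c 1)

private lemma pd_add' {n : ℕ} {f g : (Fin n → ℝ) → ℝ} {x : Fin n → ℝ}
    (hf : DifferentiableAt ℝ f x) (hg : DifferentiableAt ℝ g x) (b : Fin n) :
    pd (fun y => f y + g y) b x = pd f b x + pd g b x := by
  unfold pd
  rw [fderiv_fun_add hf hg, ContinuousLinearMap.add_apply]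

private lemma pd_const_mul' {n : ℕ} {f : (Fin n → ℝ) → ℝ} {x : Fin n → ℝ}
    (hf : DifferentiableAt ℝ f x) (c : ℝ) (b : Fin n) :
    pd (fun y => c * f y) b x = c * pd f b x := by
  unfold pd
  rw [fderiv_const_mul hf c]
  simp

private lemma pd_const' {n : ℕ} (c : ℝ) (b : Fin n) (x : Fin n → ℝ) :
    pd (fun _ => c) b x = 0 := by
  unfold pd
  simp

private lemma pd_sum' {n : ℕ} {ι : Type*} (s : Finset ι) {F : ι → (Fin n → ℝ) → ℝ}
    {x : Fin n → ℝ} (h : ∀ i ∈ s, DifferentiableAt ℝ (F i) x) (b : Fin n) :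
    pd (fun y => ∑ i ∈ s, F i y) b x = ∑ i ∈ s, pd (F i) b x := by
  unfold pd
  rw [fderiv_fun_sum h]
  simp

private lemma contDiff_pd {n : ℕ} {f : (Fin n → ℝ) → ℝ} {k m : WithTop ℕ∞}
    (hf : ContDiff ℝ m f) (h : k + 1 ≤ m) (c : Fin n) : ContDiff ℝ k (pd f c) := by
  have : pd f c = fun x =>
      (ContinuousLinearMap.apply ℝ ℝ (Pi.single c 1 : Fin n → ℝ)) (fderiv ℝ f x) := rfl
  rw [this]
  exact (ContinuousLinearMap.apply ℝ ℝ _).contDiff.comp (hf.fderiv_right h)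

private lemma pd_swap {n : ℕ} {f : (Fin n → ℝ) → ℝ} (hf : ContDiff ℝ 2 f)
    (a b : Fin n) (x : Fin n → ℝ) :
    pd (pd f a) b x = pd (pd f b) a x := by
  have hd : Differentiable ℝ (fderiv ℝ f) :=
    (hf.fderiv_right (m := 1) (by norm_num)).differentiable (by norm_num)
  have key : ∀ v w : Fin n → ℝ,
      fderiv ℝ (fun y => fderiv ℝ f y v) x w = fderiv ℝ (fderiv ℝ f) x w v := by
    intro v w
    have h2 := ((ContinuousLinearMap.apply ℝ ℝ v).hasFDerivAt.comp x (hd x).hasFDerivAt)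
    have h3 : (fun y => fderiv ℝ f y v) =
        (ContinuousLinearMap.apply ℝ ℝ v) ∘ (fderiv ℝ f) := rfl
    rw [h3, h2.fderiv]
    rfl
  have hsymm := (hf.contDiffAt (x := x)).isSymmSndFDerivAt (n := 2) (by simp [minSmoothness_of_isRCLikeNormedField])
  show fderiv ℝ (fun y => fderiv ℝ f y (Pi.single a 1)) x (Pi.single b 1)
      = fderiv ℝ (fun y => fderiv ℝ f y (Pi.single b 1)) x (Pi.single a 1)
  rw [key, key]
  exact hsymm _ _

/-- The contracted divergence `∑ η⁻¹ c d ∂_c X_d`. -/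
noncomputable def divX {n : ℕ} (ηi : Matrix (Fin n) (Fin n) ℝ)
    (X : (Fin n → ℝ) → Fin n → ℝ) : (Fin n → ℝ) → ℝ :=
  fun y => ∑ c, ∑ d, ηi c d * pd (fun w => X w d) c y

section aux
variable {n : ℕ} {ηi : Matrix (Fin n) (Fin n) ℝ} {X : (Fin n → ℝ) → Fin n → ℝ}
  (hX : ∀ a, ContDiff ℝ 3 (fun y => X y a))
include hX

private lemma hC2 (d c : Fin n) : ContDiff ℝ 2 (pd (fun y => X y d) c) :=
  contDiff_pd (hX d) (by norm_num) c

private lemma hC1 (d c b : Fin n) : ContDiff ℝ 1 (pd (pd (fun y => X y d) c) b) :=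
  contDiff_pd (hC2 hX d c) (by norm_num) b

private lemma divX_contDiff : ContDiff ℝ 2 (divX ηi X) := by
  unfold divX
  exact ContDiff.sum fun c _ => ContDiff.sum fun d _ => contDiff_const.mul (hC2 hX d c)

private lemma pd_divX (b : Fin n) :
    pd (divX ηi X) b = fun y => ∑ c, ∑ d, ηi c d * pd (pd (fun w => X w d) c) b y := by
  funext y
  unfold divX
  rw [pd_sum' _ (F := fun c y => ∑ d, ηi c d * pd (fun w => X w d) c y)
    (fun c _ => DifferentiableAt.fun_sum fun d _ =>
    (((hC2 hX d c).differentiable (by norm_num)) y).const_mul _) b]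
  refine Finset.sum_congr rfl fun c _ => ?_
  rw [pd_sum' _ (F := fun d y => ηi c d * pd (fun w => X w d) c y)
    (fun d _ => (((hC2 hX d c).differentiable (by norm_num)) y).const_mul _) b]
  refine Finset.sum_congr rfl fun d _ => ?_
  rw [pd_const_mul' (((hC2 hX d c).differentiable (by norm_num)) y) _ b]

private lemma pd_pd_divX (b m : Fin n) (x : Fin n → ℝ) :
    pd (pd (divX ηi X) b) m x
      = ∑ c, ∑ d, ηi c d * pd (pd (pd (fun w => X w d) c) b) m x := by
  rw [pd_divX hX b]
  rw [pd_sum' _ (F := fun c y => ∑ d, ηi c d * pd (pd (fun w => X w d) c) b y)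
    (fun c _ => DifferentiableAt.fun_sum fun d _ =>
    (((hC1 hX d c b).differentiable (by norm_num)) x).const_mul _) m]
  refine Finset.sum_congr rfl fun c _ => ?_
  rw [pd_sum' _ (F := fun d y => ηi c d * pd (pd (fun w => X w d) c) b y)
    (fun d _ => (((hC1 hX d c b).differentiable (by norm_num)) x).const_mul _) m]
  refine Finset.sum_congr rfl fun d _ => ?_
  rw [pd_const_mul' (((hC1 hX d c b).differentiable (by norm_num)) x) _ m]

-- triple-derivative swap lemmas
omit hX in
private lemma pd3_inner {f : (Fin n → ℝ) → ℝ} (hf : ContDiff ℝ 3 f) (c b a : Fin n)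
    (x : Fin n → ℝ) :
    pd (pd (pd f c) b) a x = pd (pd (pd f b) c) a x := by
  have h : pd (pd f c) b = pd (pd f b) c :=
    funext fun y => pd_swap (hf.of_le (by norm_num)) c b y
  rw [h]

omit hX in
private lemma pd3_outer {f : (Fin n → ℝ) → ℝ} (hf : ContDiff ℝ 3 f) (c b a : Fin n)
    (x : Fin n → ℝ) :
    pd (pd (pd f c) b) a x = pd (pd (pd f c) a) b x :=
  pd_swap (contDiff_pd hf (by norm_num) c) b a x

omit hX in
private lemma pd3_in_out {f : (Fin n → ℝ) → ℝ} (hf : ContDiff ℝ 3 f) (c b a : Fin n)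
    (x : Fin n → ℝ) :
    pd (pd (pd f c) b) a x = pd (pd (pd f a) b) c x := by
  rw [pd3_inner hf c b a x, pd3_outer hf b c a x, pd3_inner hf b a c x]
end aux

private lemma sum4_reorder {M : Type*} [AddCommMonoid M] {n : ℕ}
    (f : Fin n → Fin n → Fin n → Fin n → M) :
    (∑ m, ∑ a, ∑ l, ∑ b, f m a l b) = ∑ l, ∑ b, ∑ m, ∑ a, f m a l b :=
  calc (∑ m, ∑ a, ∑ l, ∑ b, f m a l b)
      = ∑ m, ∑ l, ∑ a, ∑ b, f m a l b :=
        Finset.sum_congr rfl fun m _ => Finset.sum_comm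
    _ = ∑ l, ∑ m, ∑ a, ∑ b, f m a l b := Finset.sum_comm
    _ = ∑ l, ∑ m, ∑ b, ∑ a, f m a l b :=
        Finset.sum_congr rfl fun l _ => Finset.sum_congr rfl fun m _ => Finset.sum_comm
    _ = ∑ l, ∑ b, ∑ m, ∑ a, f m a l b :=
        Finset.sum_congr rfl fun l _ => Finset.sum_comm

private lemma cancel_aux {q c : ℝ} (h : q + q = c * q) (hc : c ≠ 2) : q = 0 := by
  have h2 : (2 - c) * q = 0 := by linear_combination h
  rcases mul_eq_zero.mp h2 with h' | h'
  · exact absurd (by linarith : c = 2) hc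
  · exact h'

/-- if `X` is `C³` and satisfies the null-like disformal Killing
equation with constant source `∂_λ X_α + ∂_α X_λ = (2/n) η_{λα} (η^{cb} ∂_c X_b)
+ 4 C_λ C_α` on `ℝⁿ`, then `ψ := (2/n) η^{cb} ∂_c X_b` is harmonic with respect
to `η`: `η^{ab} ∂_a ∂_b ψ = 0`. -/
theorem disformal_killing_divergence_harmonic {n : ℕ} (hn : 2 ≤ n)
    (η : Matrix (Fin n) (Fin n) ℝ) (hη : IsUnit η.det) (hηsym : η.IsSymm)
    (C : Fin n → ℝ)
    (X : (Fin n → ℝ) → Fin n → ℝ)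
    (hX : ∀ a, ContDiff ℝ 3 (fun y => X y a))
    (hkilling : ∀ x : Fin n → ℝ, ∀ l a : Fin n,
      pd (fun y => X y a) l x + pd (fun y => X y l) a x =
        (2 / (n : ℝ)) * η l a *
            (∑ c, ∑ b, η⁻¹ c b * pd (fun y => X y b) c x) +
          4 * C l * C a) :
    ∀ x : Fin n → ℝ,
      (∑ a, ∑ b, η⁻¹ a b *
        pd (fun y =>
          pd (fun z => (2 / (n : ℝ)) *
            (∑ c, ∑ d, η⁻¹ c d * pd (fun w => X w d) c z)) b y) a x) = 0 := by
  intro x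
  -- basic differentiability facts
  have hdS : Differentiable ℝ (divX η⁻¹ X) :=
    (divX_contDiff hX).differentiable (by norm_num)
  have hdpdS : ∀ b, Differentiable ℝ (pd (divX η⁻¹ X) b) := fun b =>
    (contDiff_pd (k := 1) (divX_contDiff hX) (by norm_num) b).differentiable (by norm_num)
  have hd2X : ∀ d c, Differentiable ℝ (pd (fun y => X y d) c) := fun d c =>
    (hC2 hX d c).differentiable (by norm_num)
  have hd3X : ∀ d c b, Differentiable ℝ (pd (pd (fun y => X y d) c) b) := fun d c b =>
    (hC1 hX d c b).differentiable (by norm_num)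
  -- rewrite the goal in terms of divX
  have hgoal : ∀ b : Fin n, (fun y =>
      pd (fun z => (2 / (n : ℝ)) *
        (∑ c, ∑ d, η⁻¹ c d * pd (fun w => X w d) c z)) b y)
      = fun y => (2 / (n : ℝ)) * pd (divX η⁻¹ X) b y := by
    intro b; funext y
    exact pd_const_mul' (hdS y) _ b
  simp only [hgoal]
  have hgoal2 : ∀ a b : Fin n, pd (fun y => (2 / (n : ℝ)) * pd (divX η⁻¹ X) b y) a x
      = (2 / (n : ℝ)) * pd (pd (divX η⁻¹ X) b) a x := fun a b =>
    pd_const_mul' (hdpdS b x) _ a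
  simp only [hgoal2]
  suffices hQ : (∑ a, ∑ b, η⁻¹ a b * pd (pd (divX η⁻¹ X) b) a x) = 0 by
    have hfactor : ∀ a b : Fin n, η⁻¹ a b * ((2 / (n : ℝ)) * pd (pd (divX η⁻¹ X) b) a x)
        = (2 / (n : ℝ)) * (η⁻¹ a b * pd (pd (divX η⁻¹ X) b) a x) := fun a b => by ring
    simp only [hfactor, ← Finset.mul_sum, hQ, mul_zero]
  -- symmetry facts
  have hsymη : ∀ i j, η i j = η j i := fun i j => (hηsym.apply i j).symm
  have hηisym : ∀ i j : Fin n, η⁻¹ i j = η⁻¹ j i := by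
    intro i j
    have h := Matrix.transpose_nonsing_inv (A := η)
    rw [hηsym.eq] at h
    calc η⁻¹ i j = η⁻¹ᵀ j i := rfl
    _ = η⁻¹ j i := by rw [h]
  have hdelta : ∀ m l : Fin n, (∑ a, η⁻¹ m a * η a l) = if m = l then 1 else 0 := by
    intro m l
    rw [← Matrix.mul_apply, Matrix.nonsing_inv_mul η hη, Matrix.one_apply]
  -- differentiated Killing equation (first derivative), as functions
  have hkillfun : ∀ l a : Fin n, (fun y =>
      pd (fun w => X w a) l y + pd (fun w => X w l) a y)
      = fun y => (2 / (n : ℝ)) * η l a * divX η⁻¹ X y + 4 * C l * C a := by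
    intro l a; funext y; exact hkilling y l a
  have E1 : ∀ b l a : Fin n, (fun y =>
      pd (pd (fun w => X w a) l) b y + pd (pd (fun w => X w l) a) b y)
      = fun y => (2 / (n : ℝ)) * η l a * pd (divX η⁻¹ X) b y := by
    intro b l a; funext y
    have h1 : pd (fun z => pd (fun w => X w a) l z + pd (fun w => X w l) a z) b y
        = pd (fun z => (2 / (n : ℝ)) * η l a * divX η⁻¹ X z + 4 * C l * C a) b y := by
      rw [hkillfun l a]
    rw [pd_add' (hd2X a l y) (hd2X l a y) b] at h1
    rw [pd_add' ((hdS y).const_mul _) (differentiableAt_const _) b,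
      pd_const_mul' (hdS y) _ b, pd_const' _ b y, add_zero] at h1
    exact h1
  -- second derivative of the Killing equation
  have E2 : ∀ m b l a : Fin n,
      pd (pd (pd (fun w => X w a) l) b) m x + pd (pd (pd (fun w => X w l) a) b) m x
      = (2 / (n : ℝ)) * η l a * pd (pd (divX η⁻¹ X) b) m x := by
    intro m b l a
    have h1 : pd (fun y => pd (pd (fun w => X w a) l) b y
          + pd (pd (fun w => X w l) a) b y) m x
        = pd (fun y => (2 / (n : ℝ)) * η l a * pd (divX η⁻¹ X) b y) m x := by
      rw [E1 b l a]
    rw [pd_add' (hd3X a l b x) (hd3X l a b x) m] at h1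
    rw [pd_const_mul' (hdpdS b x) _ m] at h1
    exact h1
  have key : ∀ b m : Fin n, pd (pd (divX η⁻¹ X) b) m x
      = ∑ c, ∑ d, η⁻¹ c d * pd (pd (pd (fun w => X w d) c) b) m x :=
    fun b m => pd_pd_divX hX b m x
  -- first contraction
  have lemA : (∑ m, ∑ a, ∑ l, ∑ b, η⁻¹ l b * η⁻¹ m a
        * pd (pd (pd (fun w => X w a) l) b) m x)
      = ∑ a, ∑ b, η⁻¹ a b * pd (pd (divX η⁻¹ X) b) a x := by
    calc (∑ m, ∑ a, ∑ l, ∑ b, η⁻¹ l b * η⁻¹ m a * pd (pd (pd (fun w => X w a) l) b) m x)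
        = ∑ m, ∑ a, ∑ l, ∑ b, η⁻¹ l b * η⁻¹ m a
            * pd (pd (pd (fun w => X w a) m) b) l x := by
          refine Finset.sum_congr rfl fun m _ => Finset.sum_congr rfl fun a _ =>
            Finset.sum_congr rfl fun l _ => Finset.sum_congr rfl fun b _ => ?_
          rw [pd3_in_out (hX a) l b m x]
      _ = ∑ l, ∑ b, ∑ m, ∑ a, η⁻¹ l b * η⁻¹ m a
            * pd (pd (pd (fun w => X w a) m) b) l x := sum4_reorder _
      _ = ∑ l, ∑ b, η⁻¹ l b * ∑ m, ∑ a, η⁻¹ m a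
            * pd (pd (pd (fun w => X w a) m) b) l x := by
          refine Finset.sum_congr rfl fun l _ => Finset.sum_congr rfl fun b _ => ?_
          rw [Finset.mul_sum]
          exact Finset.sum_congr rfl fun m _ => by
            rw [Finset.mul_sum]
            exact Finset.sum_congr rfl fun a _ => by ring
      _ = ∑ l, ∑ b, η⁻¹ l b * pd (pd (divX η⁻¹ X) b) l x := by
          refine Finset.sum_congr rfl fun l _ => Finset.sum_congr rfl fun b _ => ?_
          rw [key b l]
  -- second contraction
  have lemB : (∑ m, ∑ a, ∑ l, ∑ b, η⁻¹ l b * η⁻¹ m a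
        * pd (pd (pd (fun w => X w l) a) b) m x)
      = ∑ a, ∑ b, η⁻¹ a b * pd (pd (divX η⁻¹ X) b) a x := by
    calc (∑ m, ∑ a, ∑ l, ∑ b, η⁻¹ l b * η⁻¹ m a * pd (pd (pd (fun w => X w l) a) b) m x)
        = ∑ m, ∑ a, ∑ l, ∑ b, η⁻¹ m a * (η⁻¹ b l
            * pd (pd (pd (fun w => X w l) b) a) m x) := by
          refine Finset.sum_congr rfl fun m _ => Finset.sum_congr rfl fun a _ =>
            Finset.sum_congr rfl fun l _ => Finset.sum_congr rfl fun b _ => ?_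
          rw [pd3_inner (hX l) a b m x, hηisym l b]
          ring
      _ = ∑ m, ∑ a, ∑ b, ∑ l, η⁻¹ m a * (η⁻¹ b l
            * pd (pd (pd (fun w => X w l) b) a) m x) := by
          refine Finset.sum_congr rfl fun m _ => Finset.sum_congr rfl fun a _ => ?_
          exact Finset.sum_comm
      _ = ∑ m, ∑ a, η⁻¹ m a * ∑ b, ∑ l, η⁻¹ b l
            * pd (pd (pd (fun w => X w l) b) a) m x := by
          refine Finset.sum_congr rfl fun m _ => Finset.sum_congr rfl fun a _ => ?_
          rw [Finset.mul_sum]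
          exact Finset.sum_congr rfl fun b _ => by rw [Finset.mul_sum]
      _ = ∑ m, ∑ a, η⁻¹ m a * pd (pd (divX η⁻¹ X) a) m x := by
          refine Finset.sum_congr rfl fun m _ => Finset.sum_congr rfl fun a _ => ?_
          rw [key a m]
  -- right-hand side contraction
  have lemC : (∑ m, ∑ a, ∑ l, ∑ b, η⁻¹ l b * η⁻¹ m a
        * ((2 / (n : ℝ)) * η l a * pd (pd (divX η⁻¹ X) b) m x))
      = (2 / (n : ℝ)) * ∑ a, ∑ b, η⁻¹ a b * pd (pd (divX η⁻¹ X) b) a x := by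
    calc (∑ m, ∑ a, ∑ l, ∑ b, η⁻¹ l b * η⁻¹ m a
          * ((2 / (n : ℝ)) * η l a * pd (pd (divX η⁻¹ X) b) m x))
        = ∑ m, ∑ l, ∑ b, ∑ a, η⁻¹ l b * η⁻¹ m a
            * ((2 / (n : ℝ)) * η l a * pd (pd (divX η⁻¹ X) b) m x) := by
          refine Finset.sum_congr rfl fun m _ => ?_
          calc (∑ a, ∑ l, ∑ b, η⁻¹ l b * η⁻¹ m a
                * ((2 / (n : ℝ)) * η l a * pd (pd (divX η⁻¹ X) b) m x))
              = ∑ l, ∑ a, ∑ b, η⁻¹ l b * η⁻¹ m a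
                * ((2 / (n : ℝ)) * η l a * pd (pd (divX η⁻¹ X) b) m x) :=
                Finset.sum_comm
            _ = ∑ l, ∑ b, ∑ a, η⁻¹ l b * η⁻¹ m a
                * ((2 / (n : ℝ)) * η l a * pd (pd (divX η⁻¹ X) b) m x) :=
                Finset.sum_congr rfl fun l _ => Finset.sum_comm
      _ = ∑ m, ∑ l, ∑ b, ((2 / (n : ℝ)) * pd (pd (divX η⁻¹ X) b) m x * η⁻¹ l b)
            * (if m = l then 1 else 0) := by
          refine Finset.sum_congr rfl fun m _ => Finset.sum_congr rfl fun l _ =>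
            Finset.sum_congr rfl fun b _ => ?_
          rw [← hdelta m l, Finset.mul_sum]
          exact Finset.sum_congr rfl fun a _ => by rw [hsymη l a]; ring
      _ = ∑ m, ∑ l, (if m = l then (∑ b, (2 / (n : ℝ))
            * pd (pd (divX η⁻¹ X) b) m x * η⁻¹ l b) else 0) := by
          refine Finset.sum_congr rfl fun m _ => Finset.sum_congr rfl fun l _ => ?_
          split <;> simp
      _ = ∑ m, ∑ b, (2 / (n : ℝ)) * pd (pd (divX η⁻¹ X) b) m x * η⁻¹ m b := by
          refine Finset.sum_congr rfl fun m _ => ?_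
          simp
      _ = (2 / (n : ℝ)) * ∑ m, ∑ b, η⁻¹ m b * pd (pd (divX η⁻¹ X) b) m x := by
          rw [Finset.mul_sum]
          refine Finset.sum_congr rfl fun m _ => ?_
          rw [Finset.mul_sum]
          exact Finset.sum_congr rfl fun b _ => by ring
  -- put it all together
  have main : (∑ a, ∑ b, η⁻¹ a b * pd (pd (divX η⁻¹ X) b) a x)
      + (∑ a, ∑ b, η⁻¹ a b * pd (pd (divX η⁻¹ X) b) a x)
      = (2 / (n : ℝ)) * ∑ a, ∑ b, η⁻¹ a b * pd (pd (divX η⁻¹ X) b) a x := by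
    rw [← lemC]
    nth_rewrite 1 [← lemA]
    rw [← lemB, ← Finset.sum_add_distrib]
    refine Finset.sum_congr rfl fun m _ => ?_
    rw [← Finset.sum_add_distrib]
    refine Finset.sum_congr rfl fun a _ => ?_
    rw [← Finset.sum_add_distrib]
    refine Finset.sum_congr rfl fun l _ => ?_
    rw [← Finset.sum_add_distrib]
    refine Finset.sum_congr rfl fun b _ => ?_
    rw [← mul_add, E2 m b l a]
  refine cancel_aux main ?_
  have hn2 : (2 : ℝ) ≤ (n : ℝ) := by exact_mod_cast hn
  have hnpos : (0 : ℝ) < (n : ℝ) := by linarith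
  have : (2 : ℝ) / (n : ℝ) ≤ 1 := by rw [div_le_one hnpos]; linarith
  intro hc
  rw [hc] at this
  linarith
end
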